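/- Assume: (i) there is a constant C > 0 such that for all n ≥ 1 and all x, y ∈ ℤ, E_μ( |N_n(x) − N_n(y)|² ) ≤ C·n^{1/2}·|x − y|; (ii) there is a constant C > 0 such that μ(S_u = 0) ≤ C·u^{−1/2} for every integer u ≥ 1; and (iii) there is a constant C > 0 such that E_μ(S_n²) ≤ C·n for every n ≥ 1. Then for every l ∈ ℤ, E_μ( | ∑_{x ∈ ℤ} ( N_n(x)² − N_n(x)·N_n(x+l) ) | ) = o(n^{3/2}) as n → ∞, i.e. n^{−3/2}·E_μ( | ∑_{x ∈ ℤ} ( N_n(x)² − N_n(x)·N_n(x+l) ) | ) → 0. -/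

import Mathlib

open MeasureTheory Filter
open scoped ENNReal

/-- Birkhoff sums `S_n = ∑_{k=0}^{n-1} φ ∘ T^k`. -/
def birkS {Ω : Type*} (T : Ω → Ω) (φ : Ω → ℤ) (n : ℕ) (ω : Ω) : ℤ :=
  ∑ k ∈ Finset.range n, φ (T^[k] ω)

/-- Local time `N_n(x) = ∑_{i=0}^{n-1} 1_{S_i = x}`. -/
def locN {Ω : Type*} (T : Ω → Ω) (φ : Ω → ℤ) (n : ℕ) (x : ℤ) (ω : Ω) : ℕ :=
  ∑ i ∈ Finset.range n, if birkS T φ i ω = x then 1 else 0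

/-!
Since `∑ₓ N(x)² = ∑ₓ N(x+l)²`, the sum equals `½ ∑ₓ (N(x) - N(x+l))²`. Fix a cutoff `K`.
If `|x| ≤ K` or `|x+l| ≤ K`, assumption (i) bounds the expected square by `C n^{1/2} |l|`,
so these `O(K)` terms contribute `O(K n^{1/2})`. For the other `x`, since `0 ≤ N ≤ n`,
`(N(x) - N(x+l))² ≤ n (N(x) + N(x+l)) ≤ n (x² N(x) + (x+l)² N(x+l)) / (K+1)²`, and
`∑ₓ x² N(x) = ∑_{i<n} S_i²`, so by (iii) they contribute `O(n³ / K²)`. Both are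
`o(n^{3/2})` as soon as `n^{3/4} ≪ K ≪ n`.
-/

theorem tsum_sq_sub_mul_comp_add {G : Type*} [AddGroup G] {f : G → ℝ}
    (hf : Summable fun x => f x ^ 2) (l : G) :
    Summable (fun x => (f x - f (x + l)) ^ 2) ∧
      ∑' x, (f x ^ 2 - f x * f (x + l)) = (∑' x, (f x - f (x + l)) ^ 2) / 2 := by
  have hshift : Summable fun x => f (x + l) ^ 2 :=
    hf.comp_injective (add_left_injective l)
  have hmul : Summable fun x => f x * f (x + l) :=
    (hf.add hshift).of_norm_bounded fun x => by
      rw [Real.norm_eq_abs, abs_mul]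
      nlinarith [sq_abs (f x), sq_abs (f (x + l)), abs_nonneg (f x), abs_nonneg (f (x + l))]
  have hexp : ∀ x, (f x - f (x + l)) ^ 2 = f x ^ 2 + f (x + l) ^ 2 - 2 * (f x * f (x + l)) :=
    fun x => by ring
  have hsq : Summable fun x => (f x - f (x + l)) ^ 2 := by
    simp_rw [hexp]; exact (hf.add hshift).sub (hmul.mul_left 2)
  refine ⟨hsq, ?_⟩
  have hshift_eq : ∑' x, f (x + l) ^ 2 = ∑' x, f x ^ 2 :=
    (Equiv.addRight l).tsum_eq fun x => f x ^ 2
  simp_rw [hexp]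
  rw [hf.tsum_sub hmul, (hf.add hshift).tsum_sub (hmul.mul_left 2), hf.tsum_add hshift,
    tsum_mul_left, hshift_eq]
  ring

theorem sq_sub_le_mul_add {a b c : ℝ} (ha : 0 ≤ a) (hb : 0 ≤ b) (hac : a ≤ c) (hbc : b ≤ c) :
    (a - b) ^ 2 ≤ c * (a + b) := by
  nlinarith

section LocalTime

variable {Ω : Type*} (T : Ω → Ω) (φ : Ω → ℤ)

theorem birkS_zero (ω : Ω) : birkS T φ 0 ω = 0 := by simp [birkS]

theorem locN_le (n : ℕ) (x : ℤ) (ω : Ω) : locN T φ n x ω ≤ n := by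
  simpa [locN, Finset.sum_boole] using (Finset.card_filter_le (Finset.range n) _)

theorem summable_locN_sq (n : ℕ) (ω : Ω) :
    Summable fun x : ℤ => (locN T φ n x ω : ℝ) ^ 2 := by
  refine summable_of_ne_finset_zero (s := (Finset.range n).image (birkS T φ · ω)) fun x hx => ?_
  simp only [Finset.mem_image, not_exists, not_and] at hx
  have hzero : locN T φ n x ω = 0 := Finset.sum_eq_zero fun i hi => if_neg (hx i hi)
  simp [hzero]

theorem ofReal_abs_tsum_le_tsum_sq_sub (n : ℕ) (l : ℤ) (ω : Ω) :
    ENNReal.ofReal |∑' x : ℤ, ((locN T φ n x ω : ℝ) ^ 2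
        - (locN T φ n x ω : ℝ) * (locN T φ n (x + l) ω : ℝ))|
      ≤ ∑' x : ℤ, ENNReal.ofReal (((locN T φ n x ω : ℝ) - locN T φ n (x + l) ω) ^ 2) := by
  obtain ⟨hsum, heq⟩ := tsum_sq_sub_mul_comp_add (summable_locN_sq T φ n ω) l
  have hnonneg : 0 ≤ ∑' x : ℤ, ((locN T φ n x ω : ℝ) - locN T φ n (x + l) ω) ^ 2 :=
    tsum_nonneg fun x => sq_nonneg _
  rw [heq, ← ENNReal.ofReal_tsum_of_nonneg (fun _ => sq_nonneg _) hsum,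
    abs_of_nonneg (by positivity)]
  exact ENNReal.ofReal_le_ofReal (by linarith)

theorem tsum_locN_mul (n : ℕ) (ω : Ω) (g : ℤ → ℝ≥0∞) :
    ∑' x, (locN T φ n x ω : ℝ≥0∞) * g x = ∑ i ∈ Finset.range n, g (birkS T φ i ω) := by
  simp only [locN, Nat.cast_sum, Finset.sum_mul, Nat.cast_ite, Nat.cast_one, Nat.cast_zero,
    ite_mul, one_mul, zero_mul]
  rw [Summable.tsum_finsetSum fun _ _ => ENNReal.summable]
  simp_rw [eq_comm (a := birkS T φ _ ω), tsum_ite_eq]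

theorem sq_sub_locN_le_of_lt_abs (n K : ℕ) {x y : ℤ} (hx : (K : ℤ) < |x|) (hy : (K : ℤ) < |y|)
    (ω : Ω) :
    ((locN T φ n x ω : ℝ) - locN T φ n y ω) ^ 2
      ≤ n / ((K : ℝ) + 1) ^ 2 * ((x : ℝ) ^ 2 * locN T φ n x ω + (y : ℝ) ^ 2 * locN T φ n y ω) := by
  have hsq : ∀ z : ℤ, (K : ℤ) < |z| → ((K : ℝ) + 1) ^ 2 ≤ (z : ℝ) ^ 2 := fun z hz => by
    rw [← sq_abs (z : ℝ)]
    gcongr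
    exact_mod_cast hz
  calc ((locN T φ n x ω : ℝ) - locN T φ n y ω) ^ 2
      ≤ n * ((locN T φ n x ω : ℝ) + locN T φ n y ω) :=
        sq_sub_le_mul_add (by positivity) (by positivity)
          (by exact_mod_cast locN_le T φ n x ω) (by exact_mod_cast locN_le T φ n y ω)
    _ = n / ((K : ℝ) + 1) ^ 2 *
          (((K : ℝ) + 1) ^ 2 * locN T φ n x ω + ((K : ℝ) + 1) ^ 2 * locN T φ n y ω) := by
        field_simp
    _ ≤ _ := by gcongr _ * (?_ * _ + ?_ * _); exacts [hsq x hx, hsq y hy]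

end LocalTime

theorem tsum_ite_mem_Icc (K : ℕ) (a : ℝ≥0∞) :
    ∑' x : ℤ, (if x ∈ Finset.Icc (-(K : ℤ)) K then a else 0) = (2 * K + 1) * a := by
  rw [tsum_eq_sum fun x hx => if_neg hx, Finset.sum_ite_of_true fun _ h => h, Finset.sum_const,
    Int.card_Icc, nsmul_eq_mul]
  congr
  norm_cast
  omega

section Integrals

variable {Ω : Type*} [MeasurableSpace Ω] {T : Ω → Ω} {φ : Ω → ℤ}

theorem measurable_birkS (hT : Measurable T) (hφ : Measurable φ) (n : ℕ) :
    Measurable (birkS T φ n) :=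
  Finset.measurable_sum _ fun k _ => hφ.comp (hT.iterate k)

theorem measurable_locN (hT : Measurable T) (hφ : Measurable φ) (n : ℕ) (x : ℤ) :
    Measurable (locN T φ n x) :=
  Finset.measurable_sum _ fun i _ =>
    Measurable.ite (measurable_birkS hT hφ i (measurableSet_singleton x)) measurable_const
      measurable_const

theorem lintegral_birkS_sq_le (μ : Measure Ω) {C : ℝ} (hC : 0 ≤ C)
    (hS : ∀ n : ℕ, 1 ≤ n →
      (∫⁻ ω, ENNReal.ofReal ((birkS T φ n ω : ℝ) ^ 2) ∂μ) ≤ ENNReal.ofReal (C * n))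
    {i n : ℕ} (hin : i ≤ n) :
    ∫⁻ ω, ENNReal.ofReal ((birkS T φ i ω : ℝ) ^ 2) ∂μ ≤ ENNReal.ofReal (C * n) := by
  rcases Nat.eq_zero_or_pos i with rfl | hi
  · simp [birkS_zero]
  · exact (hS i hi).trans (ENNReal.ofReal_le_ofReal (by gcongr))

theorem tsum_lintegral_sq_mul_locN (hT : Measurable T) (hφ : Measurable φ) (μ : Measure Ω)
    (n : ℕ) :
    ∑' x : ℤ, ∫⁻ ω, ENNReal.ofReal ((x : ℝ) ^ 2 * locN T φ n x ω) ∂μ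
      = ∑ i ∈ Finset.range n, ∫⁻ ω, ENNReal.ofReal ((birkS T φ i ω : ℝ) ^ 2) ∂μ := by
  have hmeasN := measurable_locN hT hφ n
  have hmeasS := measurable_birkS hT hφ
  rw [← lintegral_tsum fun x => by fun_prop, ← lintegral_finsetSum _ fun i _ => by fun_prop]
  congr 1 with ω
  rw [← tsum_locN_mul T φ n ω fun x : ℤ => ENNReal.ofReal ((x : ℝ) ^ 2)]
  congr 1 with x
  rw [ENNReal.ofReal_mul (sq_nonneg _), ENNReal.ofReal_natCast, mul_comm]

theorem lintegral_sq_sub_locN_le (hT : Measurable T) (hφ : Measurable φ) (μ : Measure Ω)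
    (n K : ℕ) (x y : ℤ) {a : ℝ≥0∞}
    (ha : ∫⁻ ω, ENNReal.ofReal (((locN T φ n x ω : ℝ) - locN T φ n y ω) ^ 2) ∂μ ≤ a) :
    ∫⁻ ω, ENNReal.ofReal (((locN T φ n x ω : ℝ) - locN T φ n y ω) ^ 2) ∂μ
      ≤ (if x ∈ Finset.Icc (-(K : ℤ)) K then a else 0)
        + (if y ∈ Finset.Icc (-(K : ℤ)) K then a else 0)
        + ENNReal.ofReal (n / ((K : ℝ) + 1) ^ 2)
          * (∫⁻ ω, ENNReal.ofReal ((x : ℝ) ^ 2 * locN T φ n x ω) ∂μ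
            + ∫⁻ ω, ENNReal.ofReal ((y : ℝ) ^ 2 * locN T φ n y ω) ∂μ) := by
  by_cases hx : x ∈ Finset.Icc (-(K : ℤ)) K
  · exact ha.trans (le_add_right (le_add_right (by rw [if_pos hx])))
  by_cases hy : y ∈ Finset.Icc (-(K : ℤ)) K
  · exact ha.trans (le_add_right (le_add_left (by rw [if_pos hy])))
  have hfar : ∀ z : ℤ, z ∉ Finset.Icc (-(K : ℤ)) K → (K : ℤ) < |z| := fun z hz => by
    rwa [Finset.mem_Icc, ← abs_le, not_le] at hz
  have hmeas := measurable_locN hT hφ n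
  rw [if_neg hx, if_neg hy, zero_add, zero_add,
    ← lintegral_add_left (by fun_prop), ← lintegral_const_mul' _ _ ENNReal.ofReal_ne_top]
  refine lintegral_mono fun ω => ?_
  rw [← ENNReal.ofReal_add (by positivity) (by positivity), ← ENNReal.ofReal_mul (by positivity)]
  exact ENNReal.ofReal_le_ofReal (sq_sub_locN_le_of_lt_abs T φ n K (hfar x hx) (hfar y hy) ω)

theorem lintegral_abs_tsum_locN_le (hT : Measurable T) (hφ : Measurable φ) (μ : Measure Ω)
    {C : ℝ} (hC : 0 ≤ C)
    (hN : ∀ n : ℕ, 1 ≤ n → ∀ x y : ℤ,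
      (∫⁻ ω, ENNReal.ofReal (((locN T φ n x ω : ℝ) - (locN T φ n y ω : ℝ)) ^ 2) ∂μ)
        ≤ ENNReal.ofReal (C * (n : ℝ) ^ ((1 : ℝ) / 2) * |(x : ℝ) - (y : ℝ)|))
    (hS : ∀ n : ℕ, 1 ≤ n →
      (∫⁻ ω, ENNReal.ofReal ((birkS T φ n ω : ℝ) ^ 2) ∂μ) ≤ ENNReal.ofReal (C * n))
    {n : ℕ} (hn : 1 ≤ n) (l : ℤ) (K : ℕ) :
    (∫⁻ ω, ENNReal.ofReal
        |∑' x : ℤ, ((locN T φ n x ω : ℝ) ^ 2 - (locN T φ n x ω : ℝ) * (locN T φ n (x + l) ω : ℝ))|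
        ∂μ)
      ≤ ENNReal.ofReal (2 * C * |(l : ℝ)| * (2 * K + 1) * (n : ℝ) ^ ((1 : ℝ) / 2)
          + 2 * C * (n : ℝ) ^ 3 / ((K : ℝ) + 1) ^ 2) := by
  set a := ENNReal.ofReal (C * (n : ℝ) ^ ((1 : ℝ) / 2) * |(l : ℝ)|)
  set c := ENNReal.ofReal (n / ((K : ℝ) + 1) ^ 2)
  have hshift : ∀ F : ℤ → ℝ≥0∞, ∑' x, F (x + l) = ∑' x, F x := (Equiv.addRight l).tsum_eq
  have hnear : ∀ x : ℤ,
      ∫⁻ ω, ENNReal.ofReal (((locN T φ n x ω : ℝ) - locN T φ n (x + l) ω) ^ 2) ∂μ ≤ a := by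
    intro x
    refine (hN n hn x (x + l)).trans_eq ?_
    rw [Int.cast_add, sub_add_cancel_left, abs_neg]
  have hmeas := measurable_locN hT hφ n
  calc _ ≤ ∫⁻ ω, ∑' x : ℤ,
          ENNReal.ofReal (((locN T φ n x ω : ℝ) - locN T φ n (x + l) ω) ^ 2) ∂μ :=
        lintegral_mono (ofReal_abs_tsum_le_tsum_sq_sub T φ n l)
    _ = ∑' x : ℤ, ∫⁻ ω, ENNReal.ofReal (((locN T φ n x ω : ℝ) - locN T φ n (x + l) ω) ^ 2) ∂μ :=
        lintegral_tsum fun x => by fun_prop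
    _ ≤ ∑' x : ℤ, ((if x ∈ Finset.Icc (-(K : ℤ)) K then a else 0)
          + (if x + l ∈ Finset.Icc (-(K : ℤ)) K then a else 0)
          + c * (∫⁻ ω, ENNReal.ofReal ((x : ℝ) ^ 2 * locN T φ n x ω) ∂μ
            + ∫⁻ ω, ENNReal.ofReal (((x + l : ℤ) : ℝ) ^ 2 * locN T φ n (x + l) ω) ∂μ)) :=
        ENNReal.tsum_le_tsum fun x => lintegral_sq_sub_locN_le hT hφ μ n K x (x + l) (hnear x)
    _ = 2 * ((2 * K + 1) * a)
          + c * (2 * ∑ i ∈ Finset.range n, ∫⁻ ω, ENNReal.ofReal ((birkS T φ i ω : ℝ) ^ 2) ∂μ) := by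
        rw [ENNReal.tsum_add, ENNReal.tsum_add, ENNReal.tsum_mul_left, ENNReal.tsum_add,
          hshift fun x => if x ∈ Finset.Icc (-(K : ℤ)) K then a else 0,
          hshift fun x => ∫⁻ ω, ENNReal.ofReal ((x : ℝ) ^ 2 * locN T φ n x ω) ∂μ,
          tsum_ite_mem_Icc, tsum_lintegral_sq_mul_locN hT hφ]
        ring
    _ ≤ 2 * ((2 * K + 1) * a) + c * (2 * ∑ _i ∈ Finset.range n, ENNReal.ofReal (C * n)) := by
        gcongr with i hi
        exact lintegral_birkS_sq_le μ hC hS (Finset.mem_range.1 hi).le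
    _ = _ := by
        rw [Finset.sum_const, Finset.card_range, nsmul_eq_mul, ← ENNReal.ofReal_natCast n,
          ← ENNReal.ofReal_ofNat 2, ← ENNReal.ofReal_natCast K, ← ENNReal.ofReal_one,
          ← ENNReal.ofReal_mul (by norm_num), ← ENNReal.ofReal_add (by positivity) (by norm_num),
          ← ENNReal.ofReal_mul (by positivity), ← ENNReal.ofReal_mul (by positivity),
          ← ENNReal.ofReal_mul (by positivity), ← ENNReal.ofReal_mul (by positivity),
          ← ENNReal.ofReal_mul (by positivity),
          ← ENNReal.ofReal_add (by positivity) (by positivity)]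
        congr 1
        field_simp

end Integrals

/-- `⌊n^{7/8}⌋`, written through `t = n^{1/8}` so that `n`, `n^{1/2}` and `n^{3/2}` become integer
powers of `t`; any exponent strictly between `3/4` and `1` would do. -/
noncomputable def cutoff (n : ℕ) : ℕ := ⌊((n : ℝ) ^ (8 : ℝ)⁻¹) ^ 7⌋₊

theorem tendsto_cutoff_bound_div {A B : ℝ} (hA : 0 ≤ A) (hB : 0 ≤ B) :
    Tendsto (fun n : ℕ => (A * (2 * cutoff n + 1) * (n : ℝ) ^ ((1 : ℝ) / 2)
      + B * (n : ℝ) ^ 3 / (cutoff n + 1) ^ 2) / (n : ℝ) ^ ((3 : ℝ) / 2)) atTop (nhds 0) := by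
  have ht : Tendsto (fun n : ℕ => (n : ℝ) ^ (8 : ℝ)⁻¹) atTop atTop :=
    (tendsto_rpow_atTop (by norm_num)).comp tendsto_natCast_atTop_atTop
  refine squeeze_zero' (Eventually.of_forall fun n => by positivity) ?_
    (by simpa using ht.inv_tendsto_atTop.const_mul (3 * A + B))
  filter_upwards [eventually_ge_atTop 1] with n hn
  set t := (n : ℝ) ^ (8 : ℝ)⁻¹ with ht_def
  have hn' : (1 : ℝ) ≤ n := by exact_mod_cast hn
  have ht1 : 1 ≤ t := Real.one_le_rpow hn' (by norm_num)
  have hnt : (n : ℝ) = t ^ 8 := by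
    rw [ht_def, ← Real.rpow_natCast, ← Real.rpow_mul (by positivity)]; norm_num
  have hrpow : ∀ r : ℝ, (n : ℝ) ^ r = t ^ (8 * r) := fun r => by
    rw [hnt, ← Real.rpow_natCast, ← Real.rpow_mul (by positivity)]; norm_num
  have hhalf : (n : ℝ) ^ ((1 : ℝ) / 2) = t ^ 4 := by
    rw [hrpow, ← Real.rpow_natCast]; norm_num
  have hthreehalves : (n : ℝ) ^ ((3 : ℝ) / 2) = t ^ 12 := by
    rw [hrpow, ← Real.rpow_natCast]; norm_num
  have hK : (cutoff n : ℝ) ≤ t ^ 7 := Nat.floor_le (by positivity)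
  have hK' : t ^ 7 ≤ cutoff n + 1 := (Nat.lt_floor_add_one _).le
  have ht7 : 1 ≤ t ^ 7 := one_le_pow₀ ht1
  rw [hhalf, hthreehalves, hnt, add_div]
  calc A * (2 * cutoff n + 1) * t ^ 4 / t ^ 12 + B * (t ^ 8) ^ 3 / (cutoff n + 1) ^ 2 / t ^ 12
      ≤ A * (3 * t ^ 7) * t ^ 4 / t ^ 12 + B * (t ^ 8) ^ 3 / (t ^ 7) ^ 2 / t ^ 12 := by
        gcongr; linarith
    _ = 3 * A * t⁻¹ + B * t⁻¹ * t⁻¹ := by field_simp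
    _ ≤ 3 * A * t⁻¹ + B * t⁻¹ * 1 := by gcongr; exact inv_le_one_of_one_le₀ ht1
    _ = (3 * A + B) * t⁻¹ := by ring

theorem stmt11_general {Ω : Type*} [MeasurableSpace Ω] (μ : Measure Ω)
    (T : Ω → Ω) (hT : MeasurePreserving T μ μ)
    (φ : Ω → ℤ) (hφ : Measurable φ)
    (C : ℝ) (hC : 0 < C)
    (hi : ∀ n : ℕ, 1 ≤ n → ∀ x y : ℤ,
      (∫⁻ ω, ENNReal.ofReal (((locN T φ n x ω : ℝ) - (locN T φ n y ω : ℝ)) ^ 2) ∂μ)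
        ≤ ENNReal.ofReal (C * (n : ℝ) ^ ((1 : ℝ) / 2) * |(x : ℝ) - (y : ℝ)|))
    (hiii : ∀ n : ℕ, 1 ≤ n →
      (∫⁻ ω, ENNReal.ofReal ((birkS T φ n ω : ℝ) ^ 2) ∂μ) ≤ ENNReal.ofReal (C * n)) :
    ∀ l : ℤ, Tendsto (fun n : ℕ =>
        (∫⁻ ω, ENNReal.ofReal
            |∑' x : ℤ, ((locN T φ n x ω : ℝ) ^ 2
              - (locN T φ n x ω : ℝ) * (locN T φ n (x + l) ω : ℝ))| ∂μ)
          / ENNReal.ofReal ((n : ℝ) ^ ((3 : ℝ) / 2)))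
      atTop (nhds 0) := by
  intro l
  have hlim := ENNReal.tendsto_ofReal
    (tendsto_cutoff_bound_div (A := 2 * C * |(l : ℝ)|) (B := 2 * C) (by positivity) (by positivity))
  rw [ENNReal.ofReal_zero] at hlim
  refine tendsto_of_tendsto_of_tendsto_of_le_of_le' tendsto_const_nhds hlim
    (Eventually.of_forall fun _ => zero_le) ?_
  filter_upwards [eventually_ge_atTop 1] with n hn
  refine ENNReal.div_le_of_le_mul ?_
  rw [← ENNReal.ofReal_mul (by positivity), div_mul_cancel₀ _ (by positivity)]
  exact lintegral_abs_tsum_locN_le hT.measurable hφ μ hC.le hi hiii hn l (cutoff n)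

/-- Assuming (i) `E_μ(|N_n(x) − N_n(y)|²) ≤ C n^{1/2} |x − y|`,
(ii) `μ(S_u = 0) ≤ C u^{-1/2}` and (iii) `E_μ(S_n²) ≤ C n`, for every `l ∈ ℤ`,
`E_μ(|∑_{x ∈ ℤ} (N_n(x)² − N_n(x) N_n(x+l))|) = o(n^{3/2})`. -/
theorem stmt11 {Ω : Type*} [MeasurableSpace Ω] (μ : Measure Ω) [IsProbabilityMeasure μ]
    (T : Ω → Ω) (hT : MeasurePreserving T μ μ)
    (φ : Ω → ℤ) (hφ : Measurable φ)
    (C : ℝ) (hC : 0 < C)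
    (hi : ∀ n : ℕ, 1 ≤ n → ∀ x y : ℤ,
      (∫⁻ ω, ENNReal.ofReal (((locN T φ n x ω : ℝ) - (locN T φ n y ω : ℝ)) ^ 2) ∂μ)
        ≤ ENNReal.ofReal (C * (n : ℝ) ^ ((1 : ℝ) / 2) * |(x : ℝ) - (y : ℝ)|))
    (hii : ∀ u : ℕ, 1 ≤ u →
      μ {ω : Ω | birkS T φ u ω = 0} ≤ ENNReal.ofReal (C * (u : ℝ) ^ (-(1 : ℝ) / 2)))
    (hiii : ∀ n : ℕ, 1 ≤ n →
      (∫⁻ ω, ENNReal.ofReal ((birkS T φ n ω : ℝ) ^ 2) ∂μ) ≤ ENNReal.ofReal (C * n)) :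
    ∀ l : ℤ, Tendsto (fun n : ℕ =>
        (∫⁻ ω, ENNReal.ofReal
            |∑' x : ℤ, ((locN T φ n x ω : ℝ) ^ 2
              - (locN T φ n x ω : ℝ) * (locN T φ n (x + l) ω : ℝ))| ∂μ)
          / ENNReal.ofReal ((n : ℝ) ^ ((3 : ℝ) / 2)))
      atTop (nhds 0) :=
  stmt11_general μ T hT φ hφ C hC hi hiii
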